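/- Let C_L, C_LT be classes of frames such that every frame in C_L has its reflexive closure (the frame obtained by adding all reflexive arrows) in C_LT, and C_LT ⊆ C_L consists of reflexive frames in C_L. Then for any formula α of L∘, α is valid on C_L under the reflexive-insensitive semantics iff α is valid on C_LT. -/
import Mathlib

/-- Formulas of the language L∘. -/
inductive RIForm : Type where
  | var : Nat → RIForm
  | neg : RIForm → RIForm
  | and : RIForm → RIForm → RIForm
  | circ : RIForm → RIForm
deriving DecidableEq

def RIForm.imp (φ ψ : RIForm) : RIForm := .neg (.and φ (.neg ψ))
def RIForm.or (φ ψ : RIForm) : RIForm := .neg (.and (.neg φ) (.neg ψ))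
def RIForm.top : RIForm := .neg (.and (.var 0) (.neg (.var 0)))
def RIForm.bot : RIForm := .and (.var 0) (.neg (.var 0))
def RIForm.iff (φ ψ : RIForm) : RIForm := .and (φ.imp ψ) (ψ.imp φ)

/-- Reflexive-insensitive satisfaction. -/
def riSat {W : Type} (R : W → W → Prop) (V : Nat → W → Prop) : W → RIForm → Prop
  | w, .var p => V p w
  | w, .neg φ => ¬ riSat R V w φ
  | w, .and φ ψ => riSat R V w φ ∧ riSat R V w ψ
  | w, .circ φ => ¬ riSat R V w φ ∨ ∀ x, R w x → riSat R V x φ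

/-- Validity on a frame under the reflexive-insensitive semantics. -/
def riValid {W : Type} (R : W → W → Prop) (φ : RIForm) : Prop :=
  ∀ V w, riSat R V w φ

lemma riSat_reflClosure {W : Type} (R : W → W → Prop) (V : Nat → W → Prop)
    (φ : RIForm) : ∀ w, riSat R V w φ ↔ riSat (fun x y => R x y ∨ x = y) V w φ := by
  induction φ with
  | var p => intro w; rfl
  | neg φ ih => intro w; simp only [riSat, ih]
  | and φ ψ ih₁ ih₂ => intro w; simp only [riSat, ih₁, ih₂]
  | circ φ ih =>
    intro w
    simp only [riSat, ← ih]
    constructor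
    · rintro (h | h)
      · exact Or.inl h
      · by_cases hw : riSat R V w φ
        · exact Or.inr (fun x hx => hx.elim (h x) (fun e => e ▸ hw))
        · exact Or.inl hw
    · rintro (h | h)
      · exact Or.inl h
      · exact Or.inr (fun x hx => h x (Or.inl hx))

theorem valid_CL_iff_valid_CLT
    (CL CLT : (W : Type) → (W → W → Prop) → Prop)
    (hclosure : ∀ (W : Type) (R : W → W → Prop),
      CL W R → CLT W (fun x y => R x y ∨ x = y))
    (hsub : ∀ (W : Type) (R : W → W → Prop), CLT W R → CL W R)
    (hrefl : ∀ (W : Type) (R : W → W → Prop), CLT W R → ∀ w, R w w)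
    (α : RIForm) :
    (∀ (W : Type) (R : W → W → Prop), CL W R → riValid R α) ↔
    (∀ (W : Type) (R : W → W → Prop), CLT W R → riValid R α) := by
  constructor
  · intro h W R hR
    exact h W R (hsub W R hR)
  · intro h W R hR V w
    exact (riSat_reflClosure R V α w).mpr (h W _ (hclosure W R hR) V w)
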